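/- arXiv:0712.1325 — 5 statements merged into one kernel-verified Lean document; each statement's English description precedes it below -/
import Mathlib

section
/- Composition rule for Choi operators (Rule 3): let 𝒜 be a linear map from matrices on ℂᵃ to matrices on ℂᶜ ⊗ ℂᵈ with Choi operator A on (ℂᶜ ⊗ ℂᵈ) ⊗ ℂᵃ, and let ℬ be a linear map from matrices on ℂᵈ ⊗ ℂᵉ to matrices on ℂᶠ with Choi operator B on ℂᶠ ⊗ (ℂᵈ ⊗ ℂᵉ). Let 𝒞 be the composite map from matrices on ℂᵃ ⊗ ℂᵉ to matrices on ℂᶜ ⊗ ℂᶠ obtained by applying 𝒜 ⊗ I_e, reordering tensor factors to (ℂᶜ) ⊗ (ℂᵈ ⊗ ℂᵉ), and then applying I_c ⊗ ℬ. Then the Choi operator of 𝒞 equals the link product A * B = Tr_d[(Aᶿᵈ ⊗ I_{f,e})(I_{c,a} ⊗ B)], where the identity factors are inserted so that both operators act on the common space spanned by the wires c, a, d, f, e, θ_d denotes partial transposition on the factor ℂᵈ, and Tr_d is the partial trace over ℂᵈ. -/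
open Matrix Kronecker

/-- The Choi operator of a linear map between matrix algebras:
`C_{(i,k),(j,l)} = (𝒞(E_{kl}))_{ij}` with `E_{kl}` the matrix units. -/
noncomputable def choi {n m : Type*} [Fintype n] [DecidableEq n]
    (𝒞 : Matrix n n ℂ →ₗ[ℂ] Matrix m m ℂ) : Matrix (m × n) (m × n) ℂ :=
  fun p q => 𝒞 (Matrix.single p.2 q.2 1) p.1 q.1

/-- The tensor product `Φ ⊗ I_e` of a linear map on matrices with the identity map on the
matrix algebra of a system `e`. -/
noncomputable def tensorId {n m : Type*} [Fintype n] [Fintype m]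
    (Φ : Matrix n n ℂ →ₗ[ℂ] Matrix m m ℂ) (e : Type*) [Fintype e] :
    Matrix (n × e) (n × e) ℂ →ₗ[ℂ] Matrix (m × e) (m × e) ℂ where
  toFun M := fun p q => Φ (fun k k' => M (k, p.2) (k', q.2)) p.1 q.1
  map_add' M N := by
    funext p q
    have h : (fun k k' => (M + N) (k, p.2) (k', q.2)) =
        ((fun k k' => M (k, p.2) (k', q.2)) : Matrix n n ℂ) +
          (fun k k' => N (k, p.2) (k', q.2)) := rfl
    show Φ _ p.1 q.1 = _
    rw [h]; exact congrFun (congrFun (Φ.map_add _ _) _) _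
  map_smul' c M := by
    funext p q
    have h : (fun k k' => (c • M) (k, p.2) (k', q.2)) =
        c • ((fun k k' => M (k, p.2) (k', q.2)) : Matrix n n ℂ) := rfl
    show Φ _ p.1 q.1 = _
    rw [h]; exact congrFun (congrFun (Φ.map_smul _ _) _) _

/-- The tensor product `I_c ⊗ Φ` of the identity map on the matrix algebra of a system `c`
with a linear map on matrices. -/
noncomputable def idTensor (c : Type*) [Fintype c] {n m : Type*} [Fintype n] [Fintype m]
    (Φ : Matrix n n ℂ →ₗ[ℂ] Matrix m m ℂ) :
    Matrix (c × n) (c × n) ℂ →ₗ[ℂ] Matrix (c × m) (c × m) ℂ where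
  toFun M := fun p q => Φ (fun k k' => M (p.1, k) (q.1, k')) p.2 q.2
  map_add' M N := by
    funext p q
    have h : (fun k k' => (M + N) (p.1, k) (q.1, k')) =
        ((fun k k' => M (p.1, k) (q.1, k')) : Matrix n n ℂ) +
          (fun k k' => N (p.1, k) (q.1, k')) := rfl
    show Φ _ p.2 q.2 = _
    rw [h]; exact congrFun (congrFun (Φ.map_add _ _) _) _
  map_smul' r M := by
    funext p q
    have h : (fun k k' => (r • M) (p.1, k) (q.1, k')) =
        r • ((fun k k' => M (p.1, k) (q.1, k')) : Matrix n n ℂ) := rfl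
    show Φ _ p.2 q.2 = _
    rw [h]; exact congrFun (congrFun (Φ.map_smul _ _) _) _

/-- Partial transposition on the `d` wire of a matrix on `(ℂᶜ ⊗ ℂᵈ) ⊗ ℂᵃ`:
`(Aᶿᵈ)_{((i,k),x),((i',k'),x')} = A_{((i,k'),x),((i',k),x')}`. -/
def ptransposeD {c d a : Type*} (A : Matrix ((c × d) × a) ((c × d) × a) ℂ) :
    Matrix ((c × d) × a) ((c × d) × a) ℂ :=
  fun p q => A ((p.1.1, q.1.2), p.2) ((q.1.1, p.1.2), q.2)

/-- The canonical reordering of wires `((c ⊗ d) ⊗ a) ⊗ (f ⊗ e) ≃ ((c ⊗ a) ⊗ d) ⊗ (f ⊗ e)`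
is given entrywise; here we bundle the underlying index bijection. -/
def reorderA (c d a f e : Type*) : (((c × d) × a) × (f × e)) ≃ (((c × a) × d) × (f × e)) where
  toFun p := (((p.1.1.1, p.1.2), p.1.1.2), p.2)
  invFun p := (((p.1.1.1, p.1.2), p.1.1.2), p.2)
  left_inv _ := rfl
  right_inv _ := rfl

/-- The canonical reordering of wires `(c ⊗ a) ⊗ (d ⊗ (f ⊗ e)) ≃ ((c ⊗ a) ⊗ d) ⊗ (f ⊗ e)`. -/
def reorderB (c a d f e : Type*) : ((c × a) × (d × (f × e))) ≃ (((c × a) × d) × (f × e)) where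
  toFun p := ((p.1, p.2.1), p.2.2)
  invFun p := ((p.1.1, (p.1.2, p.2)))
  left_inv _ := rfl
  right_inv _ := rfl

/-- The reordering of wires `f ⊗ (d ⊗ e) ≃ d ⊗ (f ⊗ e)` on the index of `B`. -/
def reorderBwires (f d e : Type*) : (f × (d × e)) ≃ (d × (f × e)) where
  toFun p := (p.2.1, (p.1, p.2.2))
  invFun p := (p.2.1, (p.1, p.2.2))
  left_inv _ := rfl
  right_inv _ := rfl

/-- Partial trace over the wire `d` sitting in the position `((c × a) × d) × (f × e)`. -/
noncomputable def ptraceD {c a d f e : Type*} [Fintype d]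
    (M : Matrix ((((c × a) × d) × (f × e))) ((((c × a) × d) × (f × e))) ℂ) :
    Matrix ((c × a) × (f × e)) ((c × a) × (f × e)) ℂ :=
  fun p q => ∑ k : d, M ((p.1, k), p.2) ((q.1, k), q.2)

/-- The link product `A * B = Tr_d[(Aᶿᵈ ⊗ I_{f,e})(I_{c,a} ⊗ B)]` of `A` on `(ℂᶜ ⊗ ℂᵈ) ⊗ ℂᵃ`
and `B` on `ℂᶠ ⊗ (ℂᵈ ⊗ ℂᵉ)`, the identity factors being inserted so that both operators act
on the common space spanned by the wires `c, a, d, f, e`. -/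
noncomputable def linkCD {c d a f e : Type*} [Fintype c] [Fintype d] [Fintype a] [Fintype f]
    [Fintype e] [DecidableEq c] [DecidableEq a] [DecidableEq f] [DecidableEq e]
    (A : Matrix ((c × d) × a) ((c × d) × a) ℂ) (B : Matrix (f × (d × e)) (f × (d × e)) ℂ) :
    Matrix ((c × a) × (f × e)) ((c × a) × (f × e)) ℂ :=
  ptraceD
    ((Matrix.reindex (reorderA c d a f e) (reorderA c d a f e)
        (ptransposeD A ⊗ₖ (1 : Matrix (f × e) (f × e) ℂ))) *
      (Matrix.reindex (reorderB c a d f e) (reorderB c a d f e)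
        ((1 : Matrix (c × a) (c × a) ℂ) ⊗ₖ
          (Matrix.reindex (reorderBwires f d e) (reorderBwires f d e) B))))

/-- The reordering identifying the index `(c × f) × (a × e)` of `Choi(𝒞)` with the index
`(c × a) × (f × e)` of the link product. -/
def reorderChoi (c f a e : Type*) : ((c × f) × (a × e)) ≃ ((c × a) × (f × e)) where
  toFun p := ((p.1.1, p.2.1), (p.1.2, p.2.2))
  invFun p := ((p.1.1, p.2.1), (p.1.2, p.2.2))
  left_inv _ := rfl
  right_inv _ := rfl

/-! The matrix unit `E_{(x,y),(x',y')} = E_{xx'} ⊗ E_{yy'}` is sent by `𝒜 ⊗ I_e` to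
`𝒜(E_{xx'}) ⊗ E_{yy'}`, whose entries are entries of `A`; expanding `ℬ` through its Choi operator,
`ℬ(M)_{uu'} = ∑_{p,q} M_{pq} B_{(u,p),(u',q)}`, gives
`∑_{k,k'} A_{((i,k),x),((i',k'),x')} B_{(u,(k,y)),(u',(k',y'))}`. This is also the entrywise form
of the link product: the identity factors force all wires but `d` to match, and the partial
transpose makes the `d`-index contracted in the trace the row index of both `A` and `B`. -/

lemma apply_apply_eq_sum_choi {n m : Type*} [Fintype n] [DecidableEq n]
    (Φ : Matrix n n ℂ →ₗ[ℂ] Matrix m m ℂ) (M : Matrix n n ℂ) (u u' : m) :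
    Φ M u u' = ∑ p : n, ∑ q : n, M p q * choi Φ (u, p) (u', q) := by
  conv_lhs => rw [matrix_eq_sum_single M]
  have hsingle : ∀ p q, single p q (M p q) = M p q • single p q 1 := fun p q => by
    rw [smul_single, smul_eq_mul, mul_one]
  simp only [map_sum, Matrix.sum_apply, hsingle, map_smul, Matrix.smul_apply, smul_eq_mul, choi]

lemma tensorId_kronecker {n m e : Type*} [Fintype n] [Fintype m] [Fintype e]
    (Φ : Matrix n n ℂ →ₗ[ℂ] Matrix m m ℂ) (M : Matrix n n ℂ) (N : Matrix e e ℂ) :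
    tensorId Φ e (M ⊗ₖ N) = Φ M ⊗ₖ N := by
  ext ⟨i, y⟩ ⟨i', y'⟩
  have hslice : (fun k k' => (M ⊗ₖ N) (k, y) (k', y')) = N y y' • M := by
    ext k k'
    simp only [kroneckerMap_apply, Matrix.smul_apply, smul_eq_mul, mul_comm]
  change Φ (fun k k' => (M ⊗ₖ N) (k, y) (k', y')) i i' = _
  rw [hslice, map_smul, Matrix.smul_apply, smul_eq_mul, kroneckerMap_apply, mul_comm]

lemma linkCD_apply {c d a f e : Type*} [Fintype c] [Fintype d] [Fintype a] [Fintype f]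
    [Fintype e] [DecidableEq c] [DecidableEq a] [DecidableEq f] [DecidableEq e]
    (A : Matrix ((c × d) × a) ((c × d) × a) ℂ) (B : Matrix (f × (d × e)) (f × (d × e)) ℂ)
    (i i' : c) (x x' : a) (u u' : f) (y y' : e) :
    linkCD A B ((i, x), (u, y)) ((i', x'), (u', y')) =
      ∑ k : d, ∑ k' : d, A ((i, k), x) ((i', k'), x') * B (u, (k, y)) (u', (k', y')) := by
  simp only [linkCD, ptraceD, mul_apply, reindex_apply, submatrix_apply, reorderA, reorderB,
    reorderBwires, Equiv.coe_fn_symm_mk, kroneckerMap_apply, ptransposeD, one_apply]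
  simp only [Fintype.sum_prod_type, ite_mul, mul_ite, zero_mul, mul_zero, one_mul, mul_one,
    Finset.sum_ite_eq, Finset.sum_ite_eq', Finset.mem_univ, if_true, Finset.sum_ite_irrel,
    Finset.sum_const_zero]
  exact Finset.sum_comm

/-- Composition rule for Choi operators, Rule 3: let `𝒜` map matrices on `ℂᵃ`
to matrices on `ℂᶜ ⊗ ℂᵈ` with Choi operator `A`, and let `ℬ` map matrices on `ℂᵈ ⊗ ℂᵉ` to
matrices on `ℂᶠ` with Choi operator `B`.  Let `𝒞` be the composite map from matrices on
`ℂᵃ ⊗ ℂᵉ` to matrices on `ℂᶜ ⊗ ℂᶠ` obtained by applying `𝒜 ⊗ I_e`, reordering tensor factors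
to `ℂᶜ ⊗ (ℂᵈ ⊗ ℂᵉ)`, and then applying `I_c ⊗ ℬ`.  Then `Choi(𝒞)` equals the link product
`A * B = Tr_d[(Aᶿᵈ ⊗ I_{f,e})(I_{c,a} ⊗ B)]` (up to the canonical identification of the two
index orderings). -/
theorem choi_composition {a c d e f : Type*} [Fintype a] [Fintype c] [Fintype d] [Fintype e]
    [Fintype f] [DecidableEq a] [DecidableEq c] [DecidableEq d] [DecidableEq e] [DecidableEq f]
    (𝒜 : Matrix a a ℂ →ₗ[ℂ] Matrix (c × d) (c × d) ℂ)
    (ℬ : Matrix (d × e) (d × e) ℂ →ₗ[ℂ] Matrix f f ℂ)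
    (𝒞 : Matrix (a × e) (a × e) ℂ →ₗ[ℂ] Matrix (c × f) (c × f) ℂ)
    (h𝒞 : 𝒞 = (idTensor c ℬ) ∘ₗ
      (Matrix.reindexLinearEquiv ℂ ℂ (Equiv.prodAssoc c d e) (Equiv.prodAssoc c d e)).toLinearMap
        ∘ₗ (tensorId 𝒜 e)) :
    Matrix.reindex (reorderChoi c f a e) (reorderChoi c f a e) (choi 𝒞) =
      linkCD (choi 𝒜) (choi ℬ) := by
  subst h𝒞
  ext ⟨⟨i, x⟩, u, y⟩ ⟨⟨i', x'⟩, u', y'⟩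
  have hA : tensorId 𝒜 e (single (x, y) (x', y') 1) = 𝒜 (single x x' 1) ⊗ₖ single y y' 1 := by
    rw [← tensorId_kronecker, single_kronecker_single, one_mul]
  change ℬ ((fun p q => tensorId 𝒜 e (single (x, y) (x', y') 1) ((i, p.1), p.2)
    ((i', q.1), q.2)) : Matrix (d × e) (d × e) ℂ) u u' = _
  refine (apply_apply_eq_sum_choi ℬ _ u u').trans ?_
  simp only [hA, linkCD_apply, Fintype.sum_prod_type, kroneckerMap_apply, single_apply, ite_and,
    mul_ite, mul_one, mul_zero, ite_mul, zero_mul, Finset.sum_ite_eq, Finset.mem_univ, if_true,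
    Finset.sum_ite_irrel, Finset.sum_const_zero]
  rfl
end

section
/- Commutativity of the link product: for any matrix A on ℂᵃ ⊗ ℂᵈ and any matrix B on ℂᵈ ⊗ ℂᵇ, the link product A * B = Tr_d[(Aᶿᵈ ⊗ I_b)(I_a ⊗ B)] on ℂᵃ ⊗ ℂᵇ coincides, after the canonical reordering of tensor factors exchanging ℂᵃ and ℂᵇ, with B * A = Tr_d[(I_a ⊗ Bᶿᵈ)(A ⊗ I_b)]. -/
open Matrix Kronecker

/-- The partial trace over the middle factor of a matrix on `ℂˣ ⊗ ℂᴶ ⊗ ℂʸ`: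
`(Tr_J M)_{(x,y),(x',y')} = Σ_k M_{(x,(k,y)),(x',(k,y'))}`. -/
noncomputable def ptraceMid {x J y : Type*} [Fintype J]
    (M : Matrix (x × J × y) (x × J × y) ℂ) : Matrix (x × y) (x × y) ℂ :=
  fun p q => ∑ k : J, M (p.1, (k, p.2)) (q.1, (k, q.2))

/-- Partial transposition on the second tensor factor:
`(Mᶿᴶ)_{(a,j),(b,j')} = M_{(a,j'),(b,j)}`. -/
def ptransposeSnd {x J : Type*} (M : Matrix (x × J) (x × J) ℂ) :
    Matrix (x × J) (x × J) ℂ :=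
  fun p q => M (p.1, q.2) (q.1, p.2)

/-- Partial transposition on the first tensor factor:
`(Mᶿᴶ)_{(j,a),(j',b)} = M_{(j',a),(j,b)}`. -/
def ptransposeFst {J y : Type*} (M : Matrix (J × y) (J × y) ℂ) :
    Matrix (J × y) (J × y) ℂ :=
  fun p q => M (q.1, p.2) (p.1, q.2)

/-- The link product of `A` on `ℂˣ ⊗ ℂᴶ` and `B` on `ℂᴶ ⊗ ℂʸ` over the common factor `ℂᴶ`:
`A * B := Tr_J[(Aᶿᴶ ⊗ I_y)(I_x ⊗ B)]`, a matrix on `ℂˣ ⊗ ℂʸ` (identity factors inserted in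
the tensor fashion, tensor factors matched via the canonical associativity reordering). -/
noncomputable def linkProduct {x J y : Type*} [Fintype x] [Fintype J] [Fintype y]
    [DecidableEq x] [DecidableEq y]
    (A : Matrix (x × J) (x × J) ℂ) (B : Matrix (J × y) (J × y) ℂ) :
    Matrix (x × y) (x × y) ℂ :=
  ptraceMid
    ((Matrix.reindex (Equiv.prodAssoc x J y) (Equiv.prodAssoc x J y)
        (ptransposeSnd A ⊗ₖ (1 : Matrix y y ℂ))) *
      ((1 : Matrix x x ℂ) ⊗ₖ B))

/-- Commutativity of the link product: for any matrix `A` on `ℂᵃ ⊗ ℂᵈ` and any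
matrix `B` on `ℂᵈ ⊗ ℂᵇ`, the link product `A * B = Tr_d[(Aᶿᵈ ⊗ I_b)(I_a ⊗ B)]` on `ℂᵃ ⊗ ℂᵇ`
coincides (after the canonical reordering of tensor factors) with
`B * A = Tr_d[(I_a ⊗ Bᶿᵈ)(A ⊗ I_b)]`. -/
theorem linkProduct_comm {a d b : Type*} [Fintype a] [Fintype d] [Fintype b]
    [DecidableEq a] [DecidableEq d] [DecidableEq b]
    (A : Matrix (a × d) (a × d) ℂ) (B : Matrix (d × b) (d × b) ℂ) :
    linkProduct A B =
      ptraceMid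
        (((1 : Matrix a a ℂ) ⊗ₖ ptransposeFst B) *
          (Matrix.reindex (Equiv.prodAssoc a d b) (Equiv.prodAssoc a d b)
            (A ⊗ₖ (1 : Matrix b b ℂ)))) := by
  ext ⟨x, y⟩ ⟨x', y'⟩
  simp only [linkProduct, ptraceMid, ptransposeSnd, ptransposeFst, Matrix.mul_apply,
    Matrix.reindex_apply, Matrix.submatrix_apply, Equiv.prodAssoc_symm_apply,
    Matrix.kroneckerMap_apply, Matrix.one_apply, Fintype.sum_prod_type,
    ite_mul, mul_ite, one_mul, mul_one, zero_mul, mul_zero,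
    Finset.sum_ite_eq, Finset.sum_ite_eq', Finset.mem_univ, if_true]
  have hL : ∀ k : d,
      (∑ x2 : a, ∑ j : d, ∑ x4 : b,
        if x2 = x' then if y = x4 then A (x, j) (x2, k) * B (j, x4) (k, y') else 0 else 0)
      = ∑ j : d, A (x, j) (x', k) * B (j, y) (k, y') := by
    intro k
    rw [Finset.sum_eq_single x']
    · simp
    · intro c _ hc
      simp [hc]
    · simp
  have hR : ∀ k : d,
      (∑ x2 : a, ∑ j : d, if x = x2 then B (j, y) (k, y') * A (x2, j) (x', k) else 0)
      = ∑ j : d, B (j, y) (k, y') * A (x, j) (x', k) := by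
    intro k
    rw [Finset.sum_eq_single x]
    · simp
    · intro c _ hc
      simp [Ne.symm hc]
    · simp
  simp only [hL, hR]
  exact Finset.sum_congr rfl fun k _ => Finset.sum_congr rfl fun j _ => mul_comm _ _
end

section
/- Associativity of the link product along a chain: let A be a matrix on ℂᵃ ⊗ ℂˣ, B a matrix on ℂˣ ⊗ ℂʸ, and C a matrix on ℂʸ ⊗ ℂᵇ, where the wires x and y are distinct. Then (A * B) * C = A * (B * C) as matrices on ℂᵃ ⊗ ℂᵇ, where the first link product is taken over ℂˣ and the second over ℂʸ (with identity factors inserted on the spectator wires in the tensor fashion). -/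
open Matrix Kronecker

lemma linkProduct_apply {x J y : Type*} [Fintype x] [Fintype J] [Fintype y]
    [DecidableEq x] [DecidableEq y]
    (A : Matrix (x × J) (x × J) ℂ) (B : Matrix (J × y) (J × y) ℂ) (p q : x × y) :
    linkProduct A B p q = ∑ k : J, ∑ j : J, A (p.1, j) (q.1, k) * B (j, p.2) (k, q.2) := by
  simp only [linkProduct, ptraceMid, ptransposeSnd, Matrix.mul_apply, Matrix.reindex_apply,
    Matrix.submatrix_apply, Equiv.prodAssoc_symm_apply, Matrix.kroneckerMap_apply,
    Matrix.one_apply, Fintype.sum_prod_type]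
  simp [Finset.mul_sum, Finset.sum_mul, mul_ite, ite_mul]

/-- Associativity of the link product along a chain: for `A` on `ℂᵃ ⊗ ℂˣ`,
`B` on `ℂˣ ⊗ ℂʸ` and `C` on `ℂʸ ⊗ ℂᵇ` (the wires `x` and `y` being distinct),
`(A * B) * C = A * (B * C)` as matrices on `ℂᵃ ⊗ ℂᵇ`, the first link product being over `ℂˣ`
and the second over `ℂʸ`. -/
theorem linkProduct_assoc {a x y b : Type*} [Fintype a] [Fintype x] [Fintype y] [Fintype b]
    [DecidableEq a] [DecidableEq x] [DecidableEq y] [DecidableEq b]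
    (A : Matrix (a × x) (a × x) ℂ) (B : Matrix (x × y) (x × y) ℂ)
    (C : Matrix (y × b) (y × b) ℂ) :
    linkProduct (linkProduct A B) C = linkProduct A (linkProduct B C) := by
  ext p q
  simp only [linkProduct_apply, Finset.sum_mul, Finset.mul_sum]
  conv_lhs => enter [2, n]; rw [Finset.sum_comm]
  conv_lhs => enter [2, n, 2, k]; rw [Finset.sum_comm]
  conv_lhs => rw [Finset.sum_comm]
  conv_lhs => enter [2, k]; rw [Finset.sum_comm]
  refine Finset.sum_congr rfl fun k _ => Finset.sum_congr rfl fun j _ =>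
    Finset.sum_congr rfl fun n _ => Finset.sum_congr rfl fun m _ => ?_
  ring
end

section
/- A one-slot quantum comb maps channels to channels: let H_0, H_1, H_2, H_3 be finite-dimensional complex Hilbert spaces and let R be a positive semidefinite operator on H_3 ⊗ H_2 ⊗ H_1 ⊗ H_0 satisfying the one-slot comb constraints: Tr_3[R] = I_2 ⊗ S for some positive semidefinite operator S on H_1 ⊗ H_0 with Tr_1[S] = I_0. Let C be the Choi operator of any completely positive trace-preserving map from matrices on H_1 to matrices on H_2 (i.e., C is a positive semidefinite operator on H_2 ⊗ H_1 with Tr_2[C] = I_1). Then the link product C' = C * R over the wires H_1 and H_2 is a positive semidefinite operator on H_3 ⊗ H_0 satisfying Tr_3[C'] = I_0; that is, C' is the Choi operator of a quantum channel from matrices on H_0 to matrices on H_3. -/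
/-! Factor `C = Aᴴ A`. Then `C * R = ∑ₘ Bₘᴴ R Bₘ` with `Bₘ = I₃ ⊗ |aₘ⟩ ⊗ I₀` built from the rows
`aₘ` of `A`, a sum of congruences of `R ≥ 0`. For the trace condition, `Tr₃` passes through the
link product, so `Tr₃[C * R] = C * (I₂ ⊗ S)`, which contracts `C` over `H₂` to `Tr₂[C] = I₁` and
leaves `Tr₁[S] = I₀`. -/

open Matrix Kronecker ComplexOrder

/-- The partial trace over the first tensor factor:
`(Tr_J M)_{a,b} = Σ_j M_{(j,a),(j,b)}`. -/
noncomputable def ptraceFst {j a : Type*} [Fintype j]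
    (M : Matrix (j × a) (j × a) ℂ) : Matrix a a ℂ :=
  fun x y => ∑ k, M (k, x) (k, y)

/-- The link product `C' = C * R` of the Choi operator `C` (on `H₂ ⊗ H₁`) of an inserted
channel with the Choi operator `R` of a one-slot comb (on `H₃ ⊗ H₂ ⊗ H₁ ⊗ H₀`), taken over
the connected wires `H₁` and `H₂`:  `C * R = Tr_{21}[(Cᶿ ⊗ I_{3,0}) R]`, where `Cᶿ` is the
partial transpose of `C` over the connected wires (i.e. the full transpose of `C`, as all of
its wires are connected), the identity factors are inserted on the spectator wires `H₃, H₀`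
in the tensor fashion, and `Tr_{21}` is the partial trace over `H₂ ⊗ H₁`. -/
noncomputable def linkInsert {h0 h1 h2 h3 : Type*}
    [Fintype h0] [Fintype h1] [Fintype h2] [Fintype h3] [DecidableEq h0] [DecidableEq h3]
    (C : Matrix (h2 × h1) (h2 × h1) ℂ)
    (R : Matrix (h3 × (h2 × (h1 × h0))) (h3 × (h2 × (h1 × h0))) ℂ) :
    Matrix (h3 × h0) (h3 × h0) ℂ :=
  fun p q => ∑ k2 : h2, ∑ k1 : h1,
    ((Matrix.reindex ((Equiv.refl h3).prodCongr (Equiv.prodAssoc h2 h1 h0))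
        ((Equiv.refl h3).prodCongr (Equiv.prodAssoc h2 h1 h0))
        ((1 : Matrix h3 h3 ℂ) ⊗ₖ (Cᵀ ⊗ₖ (1 : Matrix h0 h0 ℂ)))) * R)
      (p.1, (k2, (k1, p.2))) (q.1, (k2, (k1, q.2)))

section

variable {h0 h1 h2 h3 : Type*} [Fintype h1] [Fintype h2]

section LinkInsert

variable [Fintype h0] [Fintype h3] [DecidableEq h0] [DecidableEq h3]

lemma linkInsert_apply (C : Matrix (h2 × h1) (h2 × h1) ℂ)
    (R : Matrix (h3 × (h2 × (h1 × h0))) (h3 × (h2 × (h1 × h0))) ℂ) (p q : h3 × h0) :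
    linkInsert C R p q = ∑ j : h2 × h1, ∑ k : h2 × h1,
      C j k * R (p.1, (j.1, (j.2, p.2))) (q.1, (k.1, (k.2, q.2))) := by
  rw [Finset.sum_comm]
  simp only [linkInsert, Fintype.sum_prod_type, Matrix.mul_apply, Matrix.reindex_apply,
    Matrix.submatrix_apply, Equiv.prodCongr_symm, Equiv.refl_symm, Equiv.prodCongr_apply,
    Equiv.coe_refl, Prod.map, id_eq, Equiv.prodAssoc_symm_apply, Matrix.kroneckerMap_apply,
    Matrix.one_apply, Matrix.transpose_apply]
  simp [ite_mul, mul_ite, Finset.sum_ite_eq, mul_comm]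

variable (h0 h3) in
/-- The operator `I₃ ⊗ |aₘ⟩ ⊗ I₀ : H₃ ⊗ H₀ → H₃ ⊗ H₂ ⊗ H₁ ⊗ H₀`, where `|aₘ⟩` is the `m`-th row
of `A` read as a vector of `H₂ ⊗ H₁`. -/
def rowInsertion (A : Matrix (h2 × h1) (h2 × h1) ℂ) (m : h2 × h1) :
    Matrix (h3 × (h2 × (h1 × h0))) (h3 × h0) ℂ :=
  fun s r => A m (s.2.1, s.2.2.1) *
    ((1 : Matrix h3 h3 ℂ) s.1 r.1 * (1 : Matrix h0 h0 ℂ) s.2.2.2 r.2)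

lemma conjTranspose_rowInsertion_mul_mul_apply (A : Matrix (h2 × h1) (h2 × h1) ℂ)
    (R : Matrix (h3 × (h2 × (h1 × h0))) (h3 × (h2 × (h1 × h0))) ℂ) (m : h2 × h1) (p q : h3 × h0) :
    ((rowInsertion h0 h3 A m)ᴴ * R * rowInsertion h0 h3 A m) p q = ∑ j : h2 × h1, ∑ k : h2 × h1,
      star (A m j) * A m k * R (p.1, (j.1, (j.2, p.2))) (q.1, (k.1, (k.2, q.2))) := by
  conv_rhs => rw [Finset.sum_comm]
  simp only [Matrix.mul_apply, Matrix.conjTranspose_apply, rowInsertion, Fintype.sum_prod_type]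
  simp [Matrix.one_apply, apply_ite (starRingEnd ℂ), ite_mul, mul_ite, Finset.sum_ite_eq',
    Finset.mul_sum, mul_comm, mul_left_comm]

lemma linkInsert_conjTranspose_mul_self (A : Matrix (h2 × h1) (h2 × h1) ℂ)
    (R : Matrix (h3 × (h2 × (h1 × h0))) (h3 × (h2 × (h1 × h0))) ℂ) :
    linkInsert (Aᴴ * A) R = ∑ m, (rowInsertion h0 h3 A m)ᴴ * R * rowInsertion h0 h3 A m := by
  ext p q
  simp only [Matrix.sum_apply, conjTranspose_rowInsertion_mul_mul_apply]
  simp only [linkInsert_apply, Matrix.mul_apply, Matrix.conjTranspose_apply, Finset.sum_mul]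
  conv_rhs => rw [Finset.sum_comm]
  exact Finset.sum_congr rfl fun j _ => Finset.sum_comm

open scoped MatrixOrder in
theorem Matrix.PosSemidef.linkInsert {C : Matrix (h2 × h1) (h2 × h1) ℂ}
    {R : Matrix (h3 × (h2 × (h1 × h0))) (h3 × (h2 × (h1 × h0))) ℂ}
    (hC : C.PosSemidef) (hR : R.PosSemidef) : (linkInsert C R).PosSemidef := by
  classical
  obtain ⟨A, rfl⟩ := CStarAlgebra.nonneg_iff_eq_star_mul_self.mp hC.nonneg
  rw [star_eq_conjTranspose, linkInsert_conjTranspose_mul_self]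
  exact posSemidef_sum _ fun m _ => hR.conjTranspose_mul_mul_same _

lemma ptraceFst_linkInsert_apply (C : Matrix (h2 × h1) (h2 × h1) ℂ)
    (R : Matrix (h3 × (h2 × (h1 × h0))) (h3 × (h2 × (h1 × h0))) ℂ) (x y : h0) :
    ptraceFst (linkInsert C R) x y = ∑ j : h2 × h1, ∑ k : h2 × h1,
      C j k * ptraceFst R (j.1, (j.2, x)) (k.1, (k.2, y)) := by
  simp only [ptraceFst, linkInsert_apply, Finset.mul_sum]
  rw [Finset.sum_comm]
  exact Finset.sum_congr rfl fun j _ => Finset.sum_comm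

end LinkInsert

lemma sum_mul_one_kronecker_apply [DecidableEq h2] (C : Matrix (h2 × h1) (h2 × h1) ℂ)
    (S : Matrix (h1 × h0) (h1 × h0) ℂ) (x y : h0) :
    ∑ j : h2 × h1, ∑ k : h2 × h1,
        C j k * ((1 : Matrix h2 h2 ℂ) ⊗ₖ S) (j.1, (j.2, x)) (k.1, (k.2, y))
      = ∑ j : h1, ∑ k : h1, ptraceFst C j k * S (j, x) (k, y) := by
  calc _ = ∑ i : h2, ∑ j : h1, ∑ k : h1, C (i, j) (i, k) * S (j, x) (k, y) := by
        simp [Fintype.sum_prod_type, Matrix.one_apply]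
    _ = _ := by
        simp only [ptraceFst, Finset.sum_mul]
        rw [Finset.sum_comm]
        exact Finset.sum_congr rfl fun j _ => Finset.sum_comm

end

theorem one_slot_comb_maps_channels_to_channels_general {h0 h1 h2 h3 : Type*}
    [Fintype h0] [Fintype h1] [Fintype h2] [Fintype h3]
    [DecidableEq h0] [DecidableEq h1] [DecidableEq h2] [DecidableEq h3]
    (R : Matrix (h3 × (h2 × (h1 × h0))) (h3 × (h2 × (h1 × h0))) ℂ)
    (S : Matrix (h1 × h0) (h1 × h0) ℂ)
    (hR : R.PosSemidef)
    (hR3 : ptraceFst R = (1 : Matrix h2 h2 ℂ) ⊗ₖ S)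
    (hS1 : ptraceFst S = 1)
    (C : Matrix (h2 × h1) (h2 × h1) ℂ)
    (hC : C.PosSemidef) (hC2 : ptraceFst C = 1) :
    (linkInsert C R).PosSemidef ∧ ptraceFst (linkInsert C R) = 1 := by
  refine ⟨hC.linkInsert hR, ?_⟩
  ext x y
  rw [ptraceFst_linkInsert_apply, hR3, sum_mul_one_kronecker_apply, hC2, ← hS1]
  simp [ptraceFst, Matrix.one_apply]

/-- A one-slot quantum comb maps channels to channels.  Let `R ≥ 0` on
`H₃ ⊗ H₂ ⊗ H₁ ⊗ H₀` satisfy the one-slot comb constraints `Tr₃[R] = I₂ ⊗ S` for some `S ≥ 0`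
on `H₁ ⊗ H₀` with `Tr₁[S] = I₀`, and let `C ≥ 0` on `H₂ ⊗ H₁` with `Tr₂[C] = I₁` be the Choi
operator of any quantum channel from `H₁` to `H₂`.  Then the link product `C' = C * R` over
the wires `H₁, H₂` is positive semidefinite on `H₃ ⊗ H₀` and satisfies `Tr₃[C'] = I₀`, i.e.
it is the Choi operator of a quantum channel from `H₀` to `H₃`. -/
theorem one_slot_comb_maps_channels_to_channels {h0 h1 h2 h3 : Type*}
    [Fintype h0] [Fintype h1] [Fintype h2] [Fintype h3]
    [DecidableEq h0] [DecidableEq h1] [DecidableEq h2] [DecidableEq h3]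
    (R : Matrix (h3 × (h2 × (h1 × h0))) (h3 × (h2 × (h1 × h0))) ℂ)
    (S : Matrix (h1 × h0) (h1 × h0) ℂ)
    (hR : R.PosSemidef) (hS : S.PosSemidef)
    (hR3 : ptraceFst R = (1 : Matrix h2 h2 ℂ) ⊗ₖ S)
    (hS1 : ptraceFst S = 1)
    (C : Matrix (h2 × h1) (h2 × h1) ℂ)
    (hC : C.PosSemidef) (hC2 : ptraceFst C = 1) :
    (linkInsert C R).PosSemidef ∧ ptraceFst (linkInsert C R) = 1 :=
  one_slot_comb_maps_channels_to_channels_general R S hR hR3 hS1 C hC hC2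
end

section
/- Dilation of probabilistic combs to a deterministic comb: let H_0, …, H_{2N+1} be finite-dimensional complex Hilbert spaces and let R_1, …, R_k be positive semidefinite operators on ⊗_{j=0}^{2N+1} H_j such that R = Σ_{i=1}^k R_i satisfies the comb constraints: there exist operators R^{(n)} on ⊗_{j=0}^{2n+1} H_j with R^{(N)} = R, R^{(-1)} = 1, and Tr_{2n+1}[R^{(n)}] = I_{2n} ⊗ R^{(n-1)} for n = 0, …, N. Define R̃ = Σ_{i=1}^k R_i ⊗ |i⟩⟨i| on (⊗_{j=0}^{2N+1} H_j) ⊗ ℂᵏ, where {|i⟩} is the standard orthonormal basis of a classical register ℂᵏ appended to the last output H_{2N+1}, i.e., with the enlarged last output space H̃_{2N+1} := H_{2N+1} ⊗ ℂᵏ. Then R̃ is positive semidefinite and satisfies the comb constraints with the same R^{(n)} for n < N, namely Tr_{H̃_{2N+1}}[R̃] = I_{2N} ⊗ R^{(N-1)}; moreover each R_i is recovered from R̃ by the compression (I ⊗ ⟨i|) R̃ (I ⊗ |i⟩) onto the register state |i⟩. -/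
/-! In the register basis `R̃ = ∑ᵢ Rᵢ ⊗ |i⟩⟨i|` is block diagonal with blocks `Rᵢ`. Hence it is
positive semidefinite, its compression onto `|i⟩` is `Rᵢ`, and tracing out the register gives back
`R = ∑ᵢ Rᵢ`; so tracing out `H_{2N+1} ⊗ ℂᵏ` from `R̃` is tracing out `H_{2N+1}` from `R`, and the
last comb constraint for `R̃` is the one for `R`. -/

open Matrix Kronecker ComplexOrder

/-- The partial trace over the last tensor factor of a matrix indexed by dependent tuples:
`(Tr_last M)_{p,q} = Σ_x M_{(p,x),(q,x)}`. -/
noncomputable def trLast {k : ℕ} {α : Fin (k + 1) → Type*} [∀ j, Fintype (α j)]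
    (M : Matrix (∀ j, α j) (∀ j, α j) ℂ) :
    Matrix (∀ j : Fin k, α j.castSucc) (∀ j : Fin k, α j.castSucc) ℂ :=
  fun p q => ∑ x : α (Fin.last k), M (Fin.snoc p x) (Fin.snoc q x)

namespace Matrix

variable {m ι : Type*} [Fintype ι] [DecidableEq ι]

def registerDilation {α : Type*} [NonAssocSemiring α] (R : ι → Matrix m m α) :
    Matrix (m × ι) (m × ι) α :=
  ∑ i, R i ⊗ₖ single i i 1

section Semiring

variable {α : Type*} [NonAssocSemiring α] (R : ι → Matrix m m α)

theorem registerDilation_apply (a b : m) (i j : ι) :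
    registerDilation R (a, i) (b, j) = if i = j then R i a b else 0 := by
  simp only [registerDilation, sum_apply, kronecker_apply, single_apply]
  split_ifs with hij
  · subst hij
    simp
  · refine Finset.sum_eq_zero fun x _ => ?_
    rw [if_neg fun hx => hij (hx.1.symm.trans hx.2), mul_zero]

theorem registerDilation_apply_self (i : ι) (a b : m) :
    registerDilation R (a, i) (b, i) = R i a b := by
  simp [registerDilation_apply]

theorem sum_registerDilation_apply_self (a b : m) :
    ∑ i, registerDilation R (a, i) (b, i) = (∑ i, R i) a b := by
  simp [registerDilation_apply_self, sum_apply]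

end Semiring

theorem PosSemidef.registerDilation {𝕜 : Type*} [RCLike 𝕜] [Finite m] {R : ι → Matrix m m 𝕜}
    (hR : ∀ i, (R i).PosSemidef) : (Matrix.registerDilation R).PosSemidef :=
  posSemidef_sum _ fun i _ => (hR i).kronecker <|
    diagonal_single i (1 : 𝕜) ▸ PosSemidef.diagonal (Pi.single_nonneg.mpr zero_le_one)

end Matrix

/-- Dilation of probabilistic combs to a deterministic comb: let
`H_0, …, H_{2N+1}` be finite-dimensional complex Hilbert spaces (`H_j = ℂ^{d j}`) and let
`R_1, …, R_k ≥ 0` on `⊗_{j=0}^{2N+1} H_j` be such that `R = Σ_i R_i` satisfies the comb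
constraints: there is a chain (encoded as `T (n+1) = R^{(n)}`, `T 0 = R^{(-1)} = 1`,
`T (N+1) = R^{(N)} = R`) with `Tr_{2n+1}[R^{(n)}] = I_{2n} ⊗ R^{(n-1)}` for `n = 0, …, N`.
Define `R̃ = Σ_i R_i ⊗ |i⟩⟨i|` on `(⊗_j H_j) ⊗ ℂᵏ`, where `{|i⟩}` is the standard basis of a
classical register `ℂᵏ` appended to the last output `H_{2N+1}` (i.e. the enlarged last
output is `H̃_{2N+1} = H_{2N+1} ⊗ ℂᵏ`).  Then `R̃` is positive semidefinite and satisfies the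
comb constraints with the same `R^{(n)}` for `n < N`, namely
`Tr_{H̃_{2N+1}}[R̃] = I_{2N} ⊗ R^{(N-1)}`; moreover each `R_i` is recovered from `R̃` by the
compression `(I ⊗ ⟨i|) R̃ (I ⊗ |i⟩)` onto the register state `|i⟩`. -/
theorem probabilistic_comb_dilation (N : ℕ) (d : Fin (2*N+2) → ℕ) (k : ℕ)
    (Rm : Fin k → Matrix (∀ j, Fin (d j)) (∀ j, Fin (d j)) ℂ)
    (hRm : ∀ i, (Rm i).PosSemidef)
    (T : ∀ n : Fin (N+2), Matrix (∀ j : Fin (2*n.val), Fin (d (j.castLE (by omega))))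
                                 (∀ j : Fin (2*n.val), Fin (d (j.castLE (by omega)))) ℂ)
    (hTN : T (Fin.last (N+1)) = ∑ i, Rm i)
    (hstep : ∀ n : Fin (N+1),
      trLast (T n.succ) = fun p q =>
        (if p (Fin.last (2*n.val)) = q (Fin.last (2*n.val)) then (1:ℂ) else 0) *
          T n.castSucc (fun j => p j.castSucc) (fun j => q j.castSucc)) :
    ((∑ i, Rm i ⊗ₖ Matrix.single i i (1:ℂ)).PosSemidef) ∧
    ((fun (p q : ∀ j : Fin (2*N+1), Fin (d j.castSucc)) =>
        ∑ x : Fin (d (Fin.last (2*N+1))), ∑ i : Fin k,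
          (∑ i', Rm i' ⊗ₖ Matrix.single i' i' (1:ℂ))
            (Fin.snoc p x, i) (Fin.snoc q x, i)) =
      fun p q =>
        (if p (Fin.last (2*N)) = q (Fin.last (2*N)) then (1:ℂ) else 0) *
          T ⟨N, by omega⟩ (fun j => p j.castSucc) (fun j => q j.castSucc)) ∧
    (∀ i : Fin k,
      (fun p q => (∑ i', Rm i' ⊗ₖ Matrix.single i' i' (1:ℂ)) (p, i) (q, i)) = Rm i) := by
  have hR : T (Fin.last N).succ = ∑ i, Rm i := hTN
  have hlast := hstep (Fin.last N)
  rw [hR] at hlast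
  refine ⟨PosSemidef.registerDilation hRm, ?_, fun i => funext₂ (registerDilation_apply_self Rm i)⟩
  refine (funext₂ fun p q => ?_).trans hlast
  exact Finset.sum_congr rfl fun x _ => sum_registerDilation_apply_self Rm _ _
end
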